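/- Let F be a (covariant) functor from the category of finitely generated commutative monoids to the category of sets. For a commutative monoid M define F̃(M) = colim_N F(N), the colimit over the directed partially ordered set of finitely generated submonoids N ⊆ M (with F applied to the inclusion maps); for a monoid homomorphism φ : M → M′, let F̃(φ) : F̃(M) → F̃(M′) be the map induced by F applied to the homomorphisms N → φ(N). Then F̃ preserves filtered colimits: for every filtered category I, every I-indexed diagram {M_i} of commutative monoids with colimit M, the canonical map colim_{i∈I} F̃(M_i) → F̃(M) is a bijection. -/

import Mathlib

open CategoryTheory CategoryTheory.Limits

abbrev FGMonCat : Type 1 :=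
  CategoryTheory.ObjectProperty.FullSubcategory (fun M : AddCommMonCat.{0} => AddMonoid.FG M)

def FGSub (M : Type) [AddCommMonoid M] : Type := {N : AddSubmonoid M // N.FG}

def subObj {M : Type} [AddCommMonoid M] (N : FGSub M) : FGMonCat :=
  ⟨AddCommMonCat.of N.1, (AddMonoid.fg_iff_addSubmonoid_fg N.1).mpr N.2⟩

def inclHom {M : Type} [AddCommMonoid M] {N N' : FGSub M} (h : N.1 ≤ N'.1) :
    subObj N ⟶ subObj N' :=
  ObjectProperty.homMk (AddCommMonCat.ofHom (AddSubmonoid.inclusion h))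

def restrHom {M M' : Type} [AddCommMonoid M] [AddCommMonoid M'] (φ : M →+ M')
    (N : FGSub M) : subObj N ⟶ subObj ⟨N.1.map φ, N.2.map φ⟩ :=
  ObjectProperty.homMk (AddCommMonCat.ofHom (φ.addSubmonoidMap N.1))

def El (F : FGMonCat ⥤ Type) (M : Type) [AddCommMonoid M] : Type :=
  Σ N : FGSub M, F.obj (subObj N)

def ElRel (F : FGMonCat ⥤ Type) (M : Type) [AddCommMonoid M] :
    El F M → El F M → Prop :=
  fun a b => ∃ h : a.1.1 ≤ b.1.1, b.2 = F.map (inclHom h) a.2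

def Ftilde (F : FGMonCat ⥤ Type) (M : Type) [AddCommMonoid M] : Type :=
  Quot (ElRel F M)

def elMap (F : FGMonCat ⥤ Type) {M M' : Type} [AddCommMonoid M] [AddCommMonoid M']
    (φ : M →+ M') : El F M → El F M' :=
  fun a => ⟨⟨a.1.1.map φ, a.1.2.map φ⟩, F.map (restrHom φ a.1) a.2⟩

def FtildeMap (F : FGMonCat ⥤ Type) {M M' : Type} [AddCommMonoid M]
    [AddCommMonoid M'] (φ : M →+ M') : Ftilde F M → Ftilde F M' :=
  Quot.lift (fun a => Quot.mk _ (elMap F φ a)) (fun a b hab => by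
    obtain ⟨h, hb⟩ := hab
    apply Quot.sound
    refine ⟨(AddSubmonoid.gc_map_comap φ).monotone_l h, ?_⟩
    show F.map (restrHom φ b.1) b.2 = _
    rw [hb]
    change (F.map (inclHom h) ≫ F.map (restrHom φ b.1)) a.2
      = (F.map (restrHom φ a.1) ≫ F.map (inclHom ((AddSubmonoid.gc_map_comap φ).monotone_l h))) a.2
    rw [← F.map_comp, ← F.map_comp]
    congr 1)

/-- Coerce a morphism of `AddCommMonCat` to a homomorphism of monoids. -/
def ccHom {A B : AddCommMonCat.{0}} (f : A ⟶ B) : ↥A →+ ↥B := f.hom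

open Submodule in
lemma exists_finset_span {R M : Type*} [Ring R] [AddCommGroup M] [Module R M]
    [IsNoetherian R M] (B : Set M) :
    ∃ s : Finset M, ↑s ⊆ B ∧ span R (↑s : Set M) = span R B := by
  classical
  obtain ⟨P, ⟨s, hs, rfl⟩, hmax⟩ :=
    set_has_maximal_iff_noetherian.mpr ‹_›
      {P | ∃ s : Finset M, ↑s ⊆ B ∧ P = span R (↑s : Set M)} ⟨⊥, ∅, by simp⟩
  have hBle : B ⊆ (span R (↑s : Set M) : Set M) := by
    intro x hx
    by_contra hxs
    exact hmax (span R (↑(insert x s) : Set M)) ⟨insert x s, by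
        simpa using Set.insert_subset hx hs, rfl⟩
      (lt_of_le_of_ne (span_mono (by simp)) (fun h => hxs (h ▸ subset_span (by simp))))
  exact ⟨s, hs, le_antisymm (span_mono hs) (span_le.mpr hBle)⟩

/-- **Rédei's theorem**, in the form we need: every additive congruence on `τ →₀ ℕ`
(for finite `τ`) contains a finite set of pairs generating it. -/
lemma redei {τ : Type} [Finite τ] (c : AddCon (τ →₀ ℕ)) :
    ∃ S : Finset ((τ →₀ ℕ) × (τ →₀ ℕ)),
      (∀ p ∈ S, c p.1 p.2) ∧
      ∀ a b, c a b → addConGen (fun x y => (x, y) ∈ S) a b := by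
  classical
  let R := AddMonoidAlgebra ℤ (τ →₀ ℕ)
  haveI : IsNoetherianRing R := inferInstanceAs (IsNoetherianRing (MvPolynomial τ ℤ))
  set B : Set R :=
    {z | ∃ p : (τ →₀ ℕ) × (τ →₀ ℕ), c p.1 p.2 ∧
      z = AddMonoidAlgebra.single p.1 1 - AddMonoidAlgebra.single p.2 1} with hB
  obtain ⟨s, hsB, hspan⟩ := exists_finset_span (R := R) B
  choose pr hpr hprz using fun z (hz : z ∈ B) => hz
  set S : Finset ((τ →₀ ℕ) × (τ →₀ ℕ)) :=
    s.attach.image (fun z => pr z.1 (hsB z.2)) with hS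
  refine ⟨S, ?_, ?_⟩
  · intro p hp
    simp only [hS, Finset.mem_image, Finset.mem_attach, true_and] at hp
    obtain ⟨z, hz⟩ := hp
    exact hz ▸ hpr _ _
  · intro a b hab
    set r : (τ →₀ ℕ) → (τ →₀ ℕ) → Prop := fun x y => (x, y) ∈ S with hr
    set Q := (addConGen r).Quotient
    set q : (τ →₀ ℕ) →+ Q := (addConGen r).mk' with hq
    set Φ : R →+* AddMonoidAlgebra ℤ Q := AddMonoidAlgebra.mapDomainRingHom ℤ q with hΦ
    have hsingle : ∀ (x : τ →₀ ℕ) (t : ℤ),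
        Φ (AddMonoidAlgebra.single x t) = AddMonoidAlgebra.single (q x) t := by
      intro x t
      show AddMonoidAlgebra.mapDomain (⇑q) (AddMonoidAlgebra.single x t) = _
      exact AddMonoidAlgebra.mapDomain_single
    have hgen : ∀ z ∈ (s : Set R), Φ z = 0 := by
      intro z hz
      have hΦz := congrArg Φ (hprz z (hsB hz))
      have h1 : Φ z = AddMonoidAlgebra.single (q (pr z (hsB hz)).1) 1
          - AddMonoidAlgebra.single (q (pr z (hsB hz)).2) 1 := by
        rw [hΦz, map_sub, hsingle, hsingle]
      have h2 : q (pr z (hsB hz)).1 = q (pr z (hsB hz)).2 :=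
        ((addConGen r).eq).mpr (AddConGen.Rel.of _ _ (by
          simp only [hr, hS, Finset.mem_image]
          exact ⟨⟨z, hz⟩, Finset.mem_attach _ _, rfl⟩))
      rw [h1, h2, sub_self]
    have hker : ∀ x ∈ Ideal.span (↑s : Set R), Φ x = 0 := by
      intro x hx
      refine Submodule.span_induction (fun z hz => hgen z hz) (map_zero Φ) ?_ ?_ hx
      · intro x y _ _ hx hy; rw [map_add, hx, hy, add_zero]
      · intro rr x _ hx; rw [smul_eq_mul, map_mul, hx, mul_zero]
    have hmem : (AddMonoidAlgebra.single a 1 - AddMonoidAlgebra.single b 1 : R)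
        ∈ Ideal.span (↑s : Set R) := by
      show _ ∈ Submodule.span R (↑s : Set R)
      rw [hspan]
      exact Submodule.subset_span ⟨(a, b), hab, rfl⟩
    have h0 := hker _ hmem
    rw [map_sub] at h0
    have h1 : (AddMonoidAlgebra.single (q a) 1 : AddMonoidAlgebra ℤ Q)
        = AddMonoidAlgebra.single (q b) 1 := by
      have : Φ (AddMonoidAlgebra.single a 1) = Φ (AddMonoidAlgebra.single b 1) :=
        sub_eq_zero.mp h0
      rwa [hsingle, hsingle] at this
    have h2 : q a = q b := by
      rcases AddMonoidAlgebra.single_inj.mp h1 with ⟨h, _⟩ | ⟨h, _⟩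
      · exact h
      · exact absurd h one_ne_zero
    exact ((addConGen r).eq).mp h2

open CategoryTheory CategoryTheory.Limits

section Pihom

variable {τ : Type} {M M' : Type} [AddCommMonoid M] [AddCommMonoid M']

noncomputable def pihom (g : τ → M) : (τ →₀ ℕ) →+ M :=
  Finsupp.liftAddHom (fun t => multiplesHom M (g t))

lemma pihom_single (g : τ → M) (t : τ) (n : ℕ) : pihom g (Finsupp.single t n) = n • g t := by
  simp [pihom, Finsupp.liftAddHom_apply_single]

lemma comp_pihom (φ : M →+ M') (g : τ → M) :
    φ.comp (pihom g) = pihom (fun t => φ (g t)) := by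
  refine Finsupp.addHom_ext fun t n => ?_
  simp [pihom_single, map_nsmul]

lemma mrange_pihom (g : τ → M) :
    AddMonoidHom.mrange (pihom g) = AddSubmonoid.closure (Set.range g) := by
  have hmem : ∀ u : τ →₀ ℕ, pihom g u ∈ AddSubmonoid.closure (Set.range g) := by
    intro u
    induction u using Finsupp.induction with
    | zero => simpa using AddSubmonoid.zero_mem _
    | single_add a b f _ _ ih =>
      rw [map_add]
      refine AddSubmonoid.add_mem _ ?_ ih
      rw [pihom_single]
      exact nsmul_mem (AddSubmonoid.subset_closure (Set.mem_range_self a)) b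
  apply le_antisymm
  · rintro x hx
    obtain ⟨u, rfl⟩ := AddMonoidHom.mem_mrange.mp hx
    exact hmem u
  · rw [AddSubmonoid.closure_le]
    rintro x ⟨t, rfl⟩
    exact AddMonoidHom.mem_mrange.mpr ⟨Finsupp.single t 1, by rw [pihom_single, one_nsmul]⟩

end Pihom


section Colim

variable {I : Type} [SmallCategory I] [IsFiltered I]
  (K : I ⥤ AddCommMonCat.{0}) (c : Cocone K)

omit [IsFiltered I] in
lemma cc_natural {i X : I} (φ : i ⟶ X) (x : K.obj i) :
    (ccHom (c.ι.app X)) ((ccHom (K.map φ)) x) = (ccHom (c.ι.app i)) x := by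
  have hw := c.w φ
  have := congrArg (fun (ψ : K.obj i ⟶ c.pt) => (ccHom ψ) x) hw
  exact this

lemma lift_family (hc : IsColimit c) {τ : Type} [Fintype τ] (g : τ → c.pt) :
    ∃ (i : I) (m : τ → K.obj i), ∀ t, (ccHom (c.ι.app i)) (m t) = g t := by
  classical
  have htc : IsColimit ((forget AddCommMonCat).mapCocone c) :=
    isColimitOfPreserves (forget AddCommMonCat) hc
  have hrep : ∀ t : τ, ∃ (i : I) (y : K.obj i), (ccHom (c.ι.app i)) y = g t := by
    intro t
    obtain ⟨i, y, hy⟩ := Types.jointly_surjective (K ⋙ forget AddCommMonCat) htc (g t)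
    exact ⟨i, y, hy⟩
  choose it xt hxt using hrep
  obtain ⟨S, hS⟩ := IsFiltered.sup_objs_exists (Finset.image it Finset.univ)
  have harr : ∀ t : τ, Nonempty (it t ⟶ S) := fun t =>
    hS (Finset.mem_image_of_mem it (Finset.mem_univ t))
  refine ⟨S, fun t => (ccHom (K.map (harr t).some)) (xt t), fun t => ?_⟩
  rw [cc_natural]
  exact hxt t

lemma equalize_list (hc : IsColimit c) (i : I) (L : List (K.obj i × K.obj i))
    (hL : ∀ p ∈ L, (ccHom (c.ι.app i)) p.1 = (ccHom (c.ι.app i)) p.2) :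
    ∃ (j : I) (f : i ⟶ j), ∀ p ∈ L, (ccHom (K.map f)) p.1 = (ccHom (K.map f)) p.2 := by
  classical
  have key : ∀ {X Y : I} (φ : i ⟶ X) (ψ : X ⟶ Y) (x : K.obj i),
      (ccHom (K.map (φ ≫ ψ))) x = (ccHom (K.map ψ)) ((ccHom (K.map φ)) x) := by
    intro X Y φ ψ x
    rw [K.map_comp]
    rfl
  induction L with
  | nil => exact ⟨i, 𝟙 i, by simp⟩
  | cons p L ih =>
    obtain ⟨j, f, hf⟩ := ih (fun q hq => hL q (List.mem_cons_of_mem p hq))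
    have htc : IsColimit ((forget AddCommMonCat).mapCocone c) :=
      isColimitOfPreserves (forget AddCommMonCat) hc
    have hp := hL p List.mem_cons_self
    obtain ⟨k, u, v, huv⟩ :=
      (Types.FilteredColimit.isColimit_eq_iff (K ⋙ forget AddCommMonCat) htc).mp hp
    have huv' : (ccHom (K.map u)) p.1 = (ccHom (K.map v)) p.2 := huv
    set h' : i ⟶ IsFiltered.coeq u v := u ≫ IsFiltered.coeqHom u v with hh'
    have h1 : (ccHom (K.map h')) p.1 = (ccHom (K.map h')) p.2 := by
      calc (ccHom (K.map h')) p.1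
          = (ccHom (K.map (IsFiltered.coeqHom u v))) ((ccHom (K.map u)) p.1) := key _ _ _
        _ = (ccHom (K.map (IsFiltered.coeqHom u v))) ((ccHom (K.map v)) p.2) := by rw [huv']
        _ = (ccHom (K.map (v ≫ IsFiltered.coeqHom u v))) p.2 := (key _ _ _).symm
        _ = (ccHom (K.map h')) p.2 := by rw [hh', IsFiltered.coeq_condition u v]
    set l := IsFiltered.max j (IsFiltered.coeq u v)
    set a : j ⟶ l := IsFiltered.leftToMax _ _
    set b : IsFiltered.coeq u v ⟶ l := IsFiltered.rightToMax _ _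
    set e := IsFiltered.coeqHom (f ≫ a) (h' ≫ b)
    refine ⟨_, f ≫ (a ≫ e), ?_⟩
    intro q hq
    rcases List.mem_cons.mp hq with rfl | hq
    · have hcond : f ≫ (a ≫ e) = h' ≫ (b ≫ e) := by
        rw [← Category.assoc, ← Category.assoc]
        exact IsFiltered.coeq_condition (f ≫ a) (h' ≫ b)
      rw [hcond, key h' (b ≫ e), key h' (b ≫ e), h1]
    · rw [key f (a ≫ e), key f (a ≫ e), hf q hq]

end Colim
section Lift

variable {I : Type} [SmallCategory I] [IsFiltered I]
  (K : I ⥤ AddCommMonCat.{0}) (c : Cocone K)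

lemma lift_inj (hc : IsColimit c) (k₀ : I) {τ : Type} [Fintype τ] (m : τ → K.obj k₀) :
    ∃ (k : I) (h : k₀ ⟶ k),
      Set.InjOn (ccHom (c.ι.app k))
        (AddSubmonoid.closure (Set.range (fun t => (ccHom (K.map h)) (m t))) : Set (K.obj k)) := by
  classical
  set g : τ → c.pt := fun t => (ccHom (c.ι.app k₀)) (m t) with hg
  set cc := AddCon.ker (pihom g) with hcc
  obtain ⟨S, hS1, hS2⟩ := redei cc
  set L := S.toList.map (fun p => (pihom m p.1, pihom m p.2)) with hLdef
  have hcomp₀ : (ccHom (c.ι.app k₀)).comp (pihom m) = pihom g := comp_pihom _ _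
  have hL : ∀ q ∈ L, (ccHom (c.ι.app k₀)) q.1 = (ccHom (c.ι.app k₀)) q.2 := by
    intro q hq
    obtain ⟨p, hp, rfl⟩ := List.mem_map.mp hq
    have h1 : cc p.1 p.2 := hS1 p (Finset.mem_toList.mp hp)
    have h2 : pihom g p.1 = pihom g p.2 := h1
    calc (ccHom (c.ι.app k₀)) (pihom m p.1) = pihom g p.1 := DFunLike.congr_fun hcomp₀ p.1
      _ = pihom g p.2 := h2
      _ = (ccHom (c.ι.app k₀)) (pihom m p.2) := (DFunLike.congr_fun hcomp₀ p.2).symm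
  obtain ⟨k, h, hk⟩ := equalize_list K c hc k₀ L hL
  set m' : τ → K.obj k := fun t => (ccHom (K.map h)) (m t) with hm'
  have hπ' : (ccHom (K.map h)).comp (pihom m) = pihom m' := comp_pihom _ _
  have hSker : ∀ p ∈ S, pihom m' p.1 = pihom m' p.2 := by
    intro p hp
    have := hk (pihom m p.1, pihom m p.2)
      (List.mem_map.mpr ⟨p, Finset.mem_toList.mpr hp, rfl⟩)
    calc pihom m' p.1 = (ccHom (K.map h)) (pihom m p.1) := (DFunLike.congr_fun hπ' p.1).symm
      _ = (ccHom (K.map h)) (pihom m p.2) := this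
      _ = pihom m' p.2 := DFunLike.congr_fun hπ' p.2
  have hcomp : (ccHom (c.ι.app k)).comp (pihom m') = pihom g := by
    rw [comp_pihom]
    congr 1
    funext t
    exact cc_natural K c h (m t)
  refine ⟨k, h, ?_⟩
  have hrange : (AddSubmonoid.closure (Set.range m') : Set (K.obj k))
      = (AddMonoidHom.mrange (pihom m') : Set (K.obj k)) := by
    rw [mrange_pihom]
  rw [show (Set.range (fun t => (ccHom (K.map h)) (m t))) = Set.range m' from rfl]
  rw [hrange]
  rintro x hx y hy hxy
  obtain ⟨u, rfl⟩ := AddMonoidHom.mem_mrange.mp hx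
  obtain ⟨v, rfl⟩ := AddMonoidHom.mem_mrange.mp hy
  have hguv : pihom g u = pihom g v := by
    rw [← hcomp]
    exact hxy
  have hgen := hS2 u v hguv
  have hker : AddCon.ker (pihom m') u v := by
    refine AddCon.addConGen_le.mpr ?_ hgen
    intro x y hxy'
    exact hSker (x, y) hxy'
  exact hker

end Lift
section QuotChar

variable (F : FGMonCat ⥤ Type) {M : Type} [AddCommMonoid M]

lemma inclHom_comp {N N' N'' : FGSub M} (h : N.1 ≤ N'.1) (h' : N'.1 ≤ N''.1) :
    inclHom h ≫ inclHom h' = inclHom (h.trans h') := rfl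

lemma inclHom_id (N : FGSub M) : inclHom (le_refl N.1) = 𝟙 (subObj N) := rfl

lemma F_map_incl_trans {N N' N'' : FGSub M} (h : N.1 ≤ N'.1) (h' : N'.1 ≤ N''.1)
    (x : F.obj (subObj N)) :
    F.map (inclHom h') (F.map (inclHom h) x) = F.map (inclHom (h.trans h')) x := by
  rw [← FunctorToTypes.map_comp_apply, inclHom_comp]

lemma fgsub_sup {N N' : AddSubmonoid M} (h : N.FG) (h' : N'.FG) : (N ⊔ N').FG := by
  obtain ⟨s, hs⟩ := h
  obtain ⟨t, ht⟩ := h'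
  classical
  exact ⟨s ∪ t, by rw [Finset.coe_union, AddSubmonoid.closure_union, hs, ht]⟩

lemma quot_mk_eq_iff (a b : El F M) :
    Quot.mk (ElRel F M) a = Quot.mk (ElRel F M) b ↔
    ∃ (C : FGSub M) (h1 : a.1.1 ≤ C.1) (h2 : b.1.1 ≤ C.1),
      F.map (inclHom h1) a.2 = F.map (inclHom h2) b.2 := by
  constructor
  · intro hab
    have key : ∀ x y : El F M, Relation.EqvGen (ElRel F M) x y →
        ∃ (C : FGSub M) (h1 : x.1.1 ≤ C.1) (h2 : y.1.1 ≤ C.1),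
          F.map (inclHom h1) x.2 = F.map (inclHom h2) y.2 := by
      intro x y hxy
      induction hxy with
      | rel x y hxy =>
        obtain ⟨h, hy⟩ := hxy
        exact ⟨y.1, h, le_refl _, by rw [hy, inclHom_id, FunctorToTypes.map_id_apply]⟩
      | refl x => exact ⟨x.1, le_refl _, le_refl _, rfl⟩
      | symm x y _ ih =>
        obtain ⟨C, h1, h2, he⟩ := ih
        exact ⟨C, h2, h1, he.symm⟩
      | trans x y z _ _ ih1 ih2 =>
        obtain ⟨C1, h1, h2, he1⟩ := ih1
        obtain ⟨C2, h3, h4, he2⟩ := ih2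
        refine ⟨⟨C1.1 ⊔ C2.1, fgsub_sup C1.2 C2.2⟩, h1.trans le_sup_left,
          h4.trans le_sup_right, ?_⟩
        calc F.map (inclHom (h1.trans le_sup_left)) x.2
            = F.map (inclHom le_sup_left) (F.map (inclHom h1) x.2) :=
              (F_map_incl_trans F _ _ _).symm
          _ = F.map (inclHom le_sup_left) (F.map (inclHom h2) y.2) := by rw [he1]
          _ = F.map (inclHom (h2.trans le_sup_left)) y.2 := F_map_incl_trans F _ _ _
          _ = F.map (inclHom (h3.trans le_sup_right)) y.2 := rfl
          _ = F.map (inclHom le_sup_right) (F.map (inclHom h3) y.2) :=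
              (F_map_incl_trans F _ _ _).symm
          _ = F.map (inclHom le_sup_right) (F.map (inclHom h4) z.2) := by rw [he2]
          _ = F.map (inclHom (h4.trans le_sup_right)) z.2 := F_map_incl_trans F _ _ _
    exact key a b (Quot.eqvGen_exact hab)
  · rintro ⟨C, h1, h2, he⟩
    have ha : Quot.mk (ElRel F M) a = Quot.mk (ElRel F M) ⟨C, F.map (inclHom h1) a.2⟩ :=
      Quot.sound ⟨h1, rfl⟩
    have hb : Quot.mk (ElRel F M) b = Quot.mk (ElRel F M) ⟨C, F.map (inclHom h2) b.2⟩ :=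
      Quot.sound ⟨h2, rfl⟩
    rw [ha, hb, he]

end QuotChar
section MainAux

variable (F : FGMonCat ⥤ Type) {I : Type} [SmallCategory I] [IsFiltered I]
  (K : I ⥤ AddCommMonCat.{0}) (c : Cocone K)

noncomputable def stageEquiv {k : I} (D : AddSubmonoid (K.obj k))
    (hinj : Set.InjOn (ccHom (c.ι.app k)) (D : Set (K.obj k))) :
    ↥D ≃+ ↥(D.map (ccHom (c.ι.app k))) :=
  AddEquiv.ofBijective ((ccHom (c.ι.app k)).addSubmonoidMap D)
    ⟨fun x y hxy => Subtype.ext (hinj x.2 y.2 (congrArg Subtype.val hxy)),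
      AddMonoidHom.addSubmonoidMap_surjective _ _⟩

omit [IsFiltered I] in
lemma stageEquiv_val {k : I} (D : AddSubmonoid (K.obj k))
    (hinj : Set.InjOn (ccHom (c.ι.app k)) (D : Set (K.obj k))) (d : ↥D) :
    (stageEquiv K c D hinj d).1 = (ccHom (c.ι.app k)) d.1 := rfl

end MainAux

/-- The canonical extension `F̃` of a set-valued functor `F` on
finitely generated commutative monoids to all commutative monoids — defined by
`F̃(M) = colim_{N ⊆ M f.g.} F(N)` (realized as `Quot (ElRel F M)`) with functorial
action `F̃(φ)` induced by `F` applied to the maps `N → φ(N)` — preserves filtered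
colimits: for every filtered colimit `M = colim M_i` of commutative monoids, the
canonical map `colim_i F̃(M_i) → F̃(M)` is a bijection, i.e. every element of
`F̃(M)` comes from some `F̃(M_i)` and two elements with the same image in `F̃(M)`
are already identified at some later stage of the diagram. -/
theorem extension_preserves_filtered_colimits (F : FGMonCat ⥤ Type)
    {I : Type} [SmallCategory I] [IsFiltered I]
    (K : I ⥤ AddCommMonCat.{0}) (c : Cocone K) (hc : IsColimit c) :
    (∀ y : Ftilde F c.pt, ∃ (i : I) (x : Ftilde F (K.obj i)),
      FtildeMap F (ccHom (c.ι.app i)) x = y) ∧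
    (∀ (i j : I) (x : Ftilde F (K.obj i)) (y : Ftilde F (K.obj j)),
      FtildeMap F (ccHom (c.ι.app i)) x = FtildeMap F (ccHom (c.ι.app j)) y →
      ∃ (k : I) (f : i ⟶ k) (g : j ⟶ k),
        FtildeMap F (ccHom (K.map f)) x = FtildeMap F (ccHom (K.map g)) y) := by
  classical
  constructor
  · -- surjectivity
    intro y
    induction y using Quot.ind with | _ a =>
    obtain ⟨⟨N, hN⟩, x⟩ := a
    obtain ⟨s, hs⟩ := id hN
    set g : {z : c.pt // z ∈ s} → c.pt := fun z => z.1 with hgdef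
    obtain ⟨k₀, m, hm⟩ := lift_family K c hc g
    obtain ⟨k, h, hinj⟩ := lift_inj K c hc k₀ m
    set m' : {z : c.pt // z ∈ s} → K.obj k := fun t => (ccHom (K.map h)) (m t) with hm'def
    set D := AddSubmonoid.closure (Set.range m') with hDdef
    have hDfg : D.FG := ⟨(Set.finite_range m').toFinset, by
      rw [Set.Finite.coe_toFinset]⟩
    have hιm' : ∀ t, (ccHom (c.ι.app k)) (m' t) = g t := by
      intro t
      calc (ccHom (c.ι.app k)) ((ccHom (K.map h)) (m t))
          = (ccHom (c.ι.app k₀)) (m t) := cc_natural K c h (m t)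
        _ = g t := hm t
    have hmap : D.map (ccHom (c.ι.app k)) = N := by
      rw [hDdef, AddMonoidHom.map_mclosure, ← Set.range_comp]
      have : (⇑(ccHom (c.ι.app k)) ∘ m') = g := funext hιm'
      rw [this, hgdef]
      have : Set.range (fun z : {z : c.pt // z ∈ s} => z.1) = (↑s : Set c.pt) :=
        Subtype.range_coe
      rw [this, hs]
    set E := stageEquiv K c D hinj with hEdef
    set Df : FGSub (K.obj k) := ⟨D, hDfg⟩ with hDf
    set ρ : subObj ⟨N, hN⟩ ⟶ subObj Df :=
      ObjectProperty.homMk (AddCommMonCat.ofHom (E.symm.toAddMonoidHom.comp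
        (AddSubmonoid.inclusion (le_of_eq hmap.symm)))) with hρ
    set xk := F.map ρ x with hxk
    have hcompid : ρ ≫ restrHom (ccHom (c.ι.app k)) Df ≫ inclHom (le_of_eq hmap)
        = 𝟙 (subObj ⟨N, hN⟩) := by
      refine ObjectProperty.hom_ext _ (AddCommMonCat.hom_ext (AddMonoidHom.ext fun a => ?_))
      have hval := congrArg Subtype.val
        (E.apply_symm_apply (AddSubmonoid.inclusion (le_of_eq hmap.symm) a))
      exact Subtype.ext hval
    have hx : x = F.map (inclHom (le_of_eq hmap))
        (F.map (restrHom (ccHom (c.ι.app k)) Df) xk) := by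
      rw [hxk, ← FunctorToTypes.map_comp_apply, ← FunctorToTypes.map_comp_apply,
        hcompid, FunctorToTypes.map_id_apply]
    refine ⟨k, Quot.mk _ ⟨Df, xk⟩, ?_⟩
    show Quot.mk _ (elMap F (ccHom (c.ι.app k)) ⟨Df, xk⟩) = _
    exact Quot.sound ⟨le_of_eq hmap, hx⟩
  · -- two elements equal in the colimit are identified at a later stage
    intro i j x y hxy
    induction x using Quot.ind with | _ ax => ?_
    induction y using Quot.ind with | _ bx => ?_
    obtain ⟨⟨A, hA⟩, a⟩ := ax
    obtain ⟨⟨B, hB⟩, b⟩ := bx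
    have hxy' : Quot.mk (ElRel F ↥c.pt) (elMap F (ccHom (c.ι.app i)) ⟨⟨A, hA⟩, a⟩)
        = Quot.mk (ElRel F ↥c.pt) (elMap F (ccHom (c.ι.app j)) ⟨⟨B, hB⟩, b⟩) := hxy
    obtain ⟨Cf, h1, h2, he⟩ := (quot_mk_eq_iff F _ _).mp hxy'
    obtain ⟨sC, hsC⟩ := id Cf.2
    obtain ⟨sA, hsA⟩ := id hA
    obtain ⟨sB, hsB⟩ := id hB
    obtain ⟨i₁, ms, hms⟩ := lift_family K c hc (fun z : {z : ↥c.pt // z ∈ sC} => z.1)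
    obtain ⟨k₀, hk₀⟩ := IsFiltered.sup_objs_exists ({i, j, i₁} : Finset I)
    obtain ⟨u⟩ := hk₀ (X := i) (by simp)
    obtain ⟨v⟩ := hk₀ (X := j) (by simp)
    obtain ⟨w⟩ := hk₀ (X := i₁) (by simp)
    set m : ({z : ↥c.pt // z ∈ sC} ⊕ ({z : ↥(K.obj i) // z ∈ sA} ⊕ {z : ↥(K.obj j) // z ∈ sB}))
        → K.obj k₀ := Sum.elim (fun z => ccHom (K.map w) (ms z))
      (Sum.elim (fun z => ccHom (K.map u) z.1) (fun z => ccHom (K.map v) z.1)) with hmdef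
    obtain ⟨k, h, hinj⟩ := lift_inj K c hc k₀ m
    set m' := fun t => ccHom (K.map h) (m t) with hm'def
    set D := AddSubmonoid.closure (Set.range m') with hDdef
    have hDfg : D.FG := ⟨(Set.finite_range m').toFinset, by rw [Set.Finite.coe_toFinset]⟩
    have hval : ∀ t, ccHom (c.ι.app k) (m' t) = ccHom (c.ι.app k₀) (m t) :=
      fun t => cc_natural K c h (m t)
    have hmemC : ∀ t, ccHom (c.ι.app k) (m' t) ∈ Cf.1 := by
      intro t
      rw [hval]
      rcases t with z | z | z
      · rw [show m (Sum.inl z) = ccHom (K.map w) (ms z) from rfl, cc_natural K c w (ms z),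
          hms z]
        exact hsC ▸ AddSubmonoid.subset_closure z.2
      · rw [show m (Sum.inr (Sum.inl z)) = ccHom (K.map u) z.1 from rfl,
          cc_natural K c u z.1]
        exact h1 ⟨z.1, hsA ▸ AddSubmonoid.subset_closure z.2, rfl⟩
      · rw [show m (Sum.inr (Sum.inr z)) = ccHom (K.map v) z.1 from rfl,
          cc_natural K c v z.1]
        exact h2 ⟨z.1, hsB ▸ AddSubmonoid.subset_closure z.2, rfl⟩
    have hDmap : AddSubmonoid.map (ccHom (c.ι.app k)) D = Cf.1 := by
      apply le_antisymm
      · rw [hDdef, AddMonoidHom.map_mclosure, AddSubmonoid.closure_le]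
        rintro z ⟨w', ⟨t, rfl⟩, rfl⟩
        exact hmemC t
      · conv_lhs => rw [← hsC]
        rw [AddSubmonoid.closure_le]
        intro z hz
        refine ⟨m' (Sum.inl ⟨z, hz⟩), AddSubmonoid.subset_closure ⟨Sum.inl ⟨z, hz⟩, rfl⟩, ?_⟩
        rw [hval, show m (Sum.inl ⟨z, hz⟩) = ccHom (K.map w) (ms ⟨z, hz⟩) from rfl,
          cc_natural K c w (ms ⟨z, hz⟩), hms ⟨z, hz⟩]
    set f : i ⟶ k := u ≫ h with hfdef
    set g' : j ⟶ k := v ≫ h with hg'def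
    have hAmap : AddSubmonoid.map (ccHom (K.map f)) A ≤ D := by
      conv_lhs => rw [← hsA]
      rw [AddMonoidHom.map_mclosure, AddSubmonoid.closure_le]
      rintro z ⟨z', hz', rfl⟩
      have hz2 : ccHom (K.map f) z' = m' (Sum.inr (Sum.inl ⟨z', hz'⟩)) := by
        show ccHom (K.map (u ≫ h)) z' = ccHom (K.map h) (ccHom (K.map u) z')
        rw [K.map_comp]
        rfl
      rw [hz2]
      exact AddSubmonoid.subset_closure ⟨_, rfl⟩
    have hBmap : AddSubmonoid.map (ccHom (K.map g')) B ≤ D := by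
      conv_lhs => rw [← hsB]
      rw [AddMonoidHom.map_mclosure, AddSubmonoid.closure_le]
      rintro z ⟨z', hz', rfl⟩
      have hz2 : ccHom (K.map g') z' = m' (Sum.inr (Sum.inr ⟨z', hz'⟩)) := by
        show ccHom (K.map (v ≫ h)) z' = ccHom (K.map h) (ccHom (K.map v) z')
        rw [K.map_comp]
        rfl
      rw [hz2]
      exact AddSubmonoid.subset_closure ⟨_, rfl⟩
    set E := stageEquiv K c D hinj with hEdef
    set θ : subObj ⟨D, hDfg⟩ ⟶ subObj Cf :=
      ObjectProperty.homMk (AddCommMonCat.ofHom ((AddSubmonoid.inclusion (le_of_eq hDmap)).comp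
        E.toAddMonoidHom)) with hθdef
    set θinv : subObj Cf ⟶ subObj ⟨D, hDfg⟩ :=
      ObjectProperty.homMk (AddCommMonCat.ofHom (E.symm.toAddMonoidHom.comp
        (AddSubmonoid.inclusion (le_of_eq hDmap.symm)))) with hθinvdef
    have hθ : θ ≫ θinv = 𝟙 (subObj ⟨D, hDfg⟩) := by
      refine ObjectProperty.hom_ext _ (AddCommMonCat.hom_ext (AddMonoidHom.ext fun d => ?_))
      have h0 : (AddSubmonoid.inclusion (le_of_eq hDmap.symm))
          ((AddSubmonoid.inclusion (le_of_eq hDmap)) (E d)) = E d := Subtype.ext rfl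
      show E.symm ((AddSubmonoid.inclusion (le_of_eq hDmap.symm))
        ((AddSubmonoid.inclusion (le_of_eq hDmap)) (E d))) = d
      rw [h0]
      exact E.symm_apply_apply d
    have hFθ : Function.Injective (F.map θ) := by
      intro p q hpq
      have hpq2 := congrArg (F.map θinv) hpq
      rwa [← FunctorToTypes.map_comp_apply, ← FunctorToTypes.map_comp_apply, hθ,
        FunctorToTypes.map_id_apply, FunctorToTypes.map_id_apply] at hpq2
    have htriA : restrHom (ccHom (K.map f)) ⟨A, hA⟩ ≫ inclHom hAmap ≫ θ
        = restrHom (ccHom (c.ι.app i)) ⟨A, hA⟩ ≫ inclHom h1 := by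
      refine ObjectProperty.hom_ext _ (AddCommMonCat.hom_ext (AddMonoidHom.ext fun z => ?_))
      have hval2 := cc_natural K c f (A.subtype z)
      exact Subtype.ext hval2
    have htriB : restrHom (ccHom (K.map g')) ⟨B, hB⟩ ≫ inclHom hBmap ≫ θ
        = restrHom (ccHom (c.ι.app j)) ⟨B, hB⟩ ≫ inclHom h2 := by
      refine ObjectProperty.hom_ext _ (AddCommMonCat.hom_ext (AddMonoidHom.ext fun z => ?_))
      have hval2 := cc_natural K c g' (B.subtype z)
      exact Subtype.ext hval2
    refine ⟨k, f, g', ?_⟩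
    show Quot.mk (ElRel F ↥(K.obj k)) (elMap F (ccHom (K.map f)) ⟨⟨A, hA⟩, a⟩)
      = Quot.mk (ElRel F ↥(K.obj k)) (elMap F (ccHom (K.map g')) ⟨⟨B, hB⟩, b⟩)
    refine (quot_mk_eq_iff F _ _).mpr ⟨⟨D, hDfg⟩, hAmap, hBmap, ?_⟩
    apply hFθ
    show F.map θ (F.map (inclHom hAmap) (F.map (restrHom (ccHom (K.map f)) ⟨A, hA⟩) a))
      = F.map θ (F.map (inclHom hBmap) (F.map (restrHom (ccHom (K.map g')) ⟨B, hB⟩) b))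
    rw [← FunctorToTypes.map_comp_apply, ← FunctorToTypes.map_comp_apply, htriA,
      ← FunctorToTypes.map_comp_apply, ← FunctorToTypes.map_comp_apply, htriB,
      FunctorToTypes.map_comp_apply, FunctorToTypes.map_comp_apply]
    exact he
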